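/- arXiv:2003.12151 — 3 statements merged into one kernel-verified Lean document; each statement's English description precedes it below -/
import Mathlib

section
/- For all x, x̂ ∈ X, u, û ∈ U, and μ, μ̂ ∈ 𝒫(X), the lifted reward satisfies |R(x,u,μ) − R(x̂,û,μ̂)| ≤ L1 (1_{x≠x̂} + ‖u − û‖₁ + ‖μ − μ̂‖₁). (Proposition 2, reward part.) -/
namespace MFG

open Finset

def IsProb {E : Type*} [Fintype E] (μ : E → ℝ) : Prop :=
  (∀ e, 0 ≤ μ e) ∧ ∑ e, μ e = 1

def l1 {E : Type*} [Fintype E] (μ ν : E → ℝ) : ℝ :=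
  ∑ e, |μ e - ν e|

def ind {E : Type*} [DecidableEq E] (x y : E) : ℝ :=
  if x = y then 0 else 1

def RewardLip {X A : Type*} [Fintype X] [Fintype A] [DecidableEq X] [DecidableEq A]
    (r : X → A → (X → ℝ) → ℝ) (L1 : ℝ) : Prop :=
  ∀ x x' a a' μ μ', IsProb μ → IsProb μ' →
    |r x a μ - r x' a' μ'| ≤ L1 * (ind x x' + 2 * ind a a' + l1 μ μ')

def KernelLip {X A : Type*} [Fintype X] [Fintype A] [DecidableEq X] [DecidableEq A]
    (p : X → A → (X → ℝ) → X → ℝ) (K1 : ℝ) : Prop :=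
  ∀ x x' a a' μ μ', IsProb μ → IsProb μ' →
    l1 (p x a μ) (p x' a' μ') ≤ K1 * (ind x x' + 2 * ind a a' + l1 μ μ')

def IsKernel {X A : Type*} [Fintype X] [Fintype A]
    (p : X → A → (X → ℝ) → X → ℝ) : Prop :=
  ∀ x a μ, IsProb μ → IsProb (p x a μ)

def RewardNonneg {X A : Type*} [Fintype X] [Fintype A]
    (r : X → A → (X → ℝ) → ℝ) : Prop :=
  ∀ x a μ, IsProb μ → 0 ≤ r x a μ

def OmegaLip {A : Type*} [Fintype A] (Ω : (A → ℝ) → ℝ) (Lreg : ℝ) : Prop :=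
  ∀ u v, IsProb u → IsProb v → |Ω u - Ω v| ≤ Lreg * l1 u v

def StrongConvex {A : Type*} [Fintype A] (Ω : (A → ℝ) → ℝ)
    (DΩ : (A → ℝ) → (A → ℝ)) (ρ : ℝ) : Prop :=
  ∀ u v, IsProb u → IsProb v →
    Ω u + (∑ a, DΩ u a * (v a - u a)) + ρ / 2 * (l1 u v) ^ 2 ≤ Ω v

noncomputable def Tbell {X A : Type*} [Fintype X] [Fintype A]
    (r : X → A → (X → ℝ) → ℝ) (p : X → A → (X → ℝ) → X → ℝ)
    (Ω : (A → ℝ) → ℝ) (β : ℝ) (μ : X → ℝ) (v : X → ℝ) (x : X) : ℝ :=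
  ⨆ u : {w : A → ℝ // IsProb w},
    ((∑ a, r x a μ * u.1 a) - Ω u.1 + β * ∑ y, v y * (∑ a, p x a μ y * u.1 a))

noncomputable def Qmax {X A : Type*} [Fintype A] (Q : X → (A → ℝ) → ℝ) (y : X) : ℝ :=
  ⨆ u : {w : A → ℝ // IsProb w}, Q y u.1

noncomputable def Lbell {X A : Type*} [Fintype X] [Fintype A]
    (r : X → A → (X → ℝ) → ℝ) (p : X → A → (X → ℝ) → X → ℝ)
    (Ω : (A → ℝ) → ℝ) (β : ℝ) (μ : X → ℝ) (Q : X → (A → ℝ) → ℝ)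
    (x : X) (u : A → ℝ) : ℝ :=
  (∑ a, r x a μ * u a) - Ω u + β * ∑ y, Qmax Q y * (∑ a, p x a μ y * u a)

def BddFixedPoint {X A : Type*} [Fintype X] [Fintype A]
    (r : X → A → (X → ℝ) → ℝ) (p : X → A → (X → ℝ) → X → ℝ)
    (Ω : (A → ℝ) → ℝ) (β : ℝ) (μ : X → ℝ) (Q : X → (A → ℝ) → ℝ) : Prop :=
  (∃ C, ∀ x u, IsProb u → |Q x u| ≤ C) ∧
  (∀ x u, IsProb u → Q x u = Lbell r p Ω β μ Q x u)

/-- Proposition 2, reward part. -/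
theorem statement0 {X A : Type*} [Fintype X] [Fintype A] [Nonempty X] [Nonempty A]
    [DecidableEq X] [DecidableEq A]
    (r : X → A → (X → ℝ) → ℝ) (L1 : ℝ) (hL1 : 0 ≤ L1)
    (hr_nonneg : RewardNonneg r) (hr : RewardLip r L1)
    (x x' : X) (u u' : A → ℝ) (hu : IsProb u) (hu' : IsProb u')
    (μ μ' : X → ℝ) (hμ : IsProb μ) (hμ' : IsProb μ') :
    |(∑ a, r x a μ * u a) - (∑ a, r x' a μ' * u' a)| ≤
      L1 * (ind x x' + l1 u u' + l1 μ μ') := by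
  obtain ⟨hu0, hu1⟩ := hu
  obtain ⟨hu'0, hu'1⟩ := hu'
  obtain ⟨a0, -, ha0⟩ := Finset.exists_min_image (Finset.univ : Finset A)
    (fun a => r x' a μ') ⟨Classical.arbitrary A, Finset.mem_univ _⟩
  obtain ⟨a1, -, ha1⟩ := Finset.exists_max_image (Finset.univ : Finset A)
    (fun a => r x' a μ') ⟨Classical.arbitrary A, Finset.mem_univ _⟩
  set c : ℝ := (r x' a0 μ' + r x' a1 μ') / 2 with hc
  have hlself : l1 μ' μ' = 0 := by simp [l1]
  have hindself : ind x' x' = (0:ℝ) := by simp [ind]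
  have hbound : ∀ a : A, |r x' a μ' - c| ≤ L1 := by
    intro a
    have h1 := ha0 a (Finset.mem_univ a)
    have h2 := ha1 a (Finset.mem_univ a)
    have h3 := hr x' x' a1 a0 μ' μ' hμ' hμ'
    have hia : ind a1 a0 ≤ 1 := by unfold ind; split <;> norm_num
    rw [hindself, hlself] at h3
    have h4 : r x' a1 μ' - r x' a0 μ' ≤ 2 * L1 := by
      have h5 := (abs_le.mp h3).2
      nlinarith
    rw [abs_le]
    constructor <;> simp only [hc] <;> nlinarith
  have hfg : ∀ a : A, |r x a μ - r x' a μ'| ≤ L1 * (ind x x' + l1 μ μ') := by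
    intro a
    have h := hr x x' a a μ μ' hμ hμ'
    have : ind a a = (0:ℝ) := by simp [ind]
    rw [this] at h
    linarith [h]
  have key : (∑ a, r x a μ * u a) - (∑ a, r x' a μ' * u' a)
      = (∑ a, (r x a μ - r x' a μ') * u a) + ∑ a, (r x' a μ' - c) * (u a - u' a) := by
    have e1 : ∑ a, (r x a μ - r x' a μ') * u a
        = (∑ a, r x a μ * u a) - ∑ a, r x' a μ' * u a := by
      rw [← Finset.sum_sub_distrib]; congr 1; ext a; ring
    have e2 : ∑ a, (r x' a μ' - c) * (u a - u' a)
        = ((∑ a, r x' a μ' * u a) - (∑ a, r x' a μ' * u' a))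
          - c * (∑ a, u a) + c * (∑ a, u' a) := by
      simp only [Finset.mul_sum, ← Finset.sum_sub_distrib, ← Finset.sum_add_distrib]
      congr 1; ext a; ring
    rw [e1, e2, hu1, hu'1]; ring
  rw [key]
  have hind0 : (0:ℝ) ≤ ind x x' := by unfold ind; split <;> norm_num
  have hl1μ0 : 0 ≤ l1 μ μ' := Finset.sum_nonneg fun _ _ => abs_nonneg _
  calc |(∑ a, (r x a μ - r x' a μ') * u a) + ∑ a, (r x' a μ' - c) * (u a - u' a)|
      ≤ |∑ a, (r x a μ - r x' a μ') * u a| + |∑ a, (r x' a μ' - c) * (u a - u' a)| :=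
        abs_add_le _ _
    _ ≤ (∑ a, |(r x a μ - r x' a μ') * u a|) + ∑ a, |(r x' a μ' - c) * (u a - u' a)| := by
        gcongr <;> exact Finset.abs_sum_le_sum_abs _ _
    _ ≤ (∑ a, L1 * (ind x x' + l1 μ μ') * u a) + ∑ a, L1 * |u a - u' a| := by
        gcongr with a _ a _
        · rw [abs_mul, abs_of_nonneg (hu0 a)]
          exact mul_le_mul_of_nonneg_right (hfg a) (hu0 a)
        · rw [abs_mul]
          exact mul_le_mul_of_nonneg_right (hbound a) (abs_nonneg _)
    _ = L1 * (ind x x' + l1 μ μ') * 1 + L1 * l1 u u' := by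
        rw [← Finset.mul_sum, ← Finset.mul_sum, hu1]; rfl
    _ = L1 * (ind x x' + l1 u u' + l1 μ μ') := by ring

end MFG
end

section
/- For all x, x̂ ∈ X, u, û ∈ U, and μ, μ̂ ∈ 𝒫(X), the lifted transition kernel satisfies ‖P(·|x,u,μ) − P(·|x̂,û,μ̂)‖₁ ≤ K1 (1_{x≠x̂} + ‖u − û‖₁ + ‖μ − μ̂‖₁). (Proposition 2, kernel part.) -/
/-
Write `P(x,u,μ) - P(x',u',μ') = Σₐ u(a) (p(x,a,μ) - p(x',a,μ')) + Σₐ (u(a) - u'(a)) p(x',a,μ')`.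
The first sum is a convex combination of differences of size at most `K1 (1_{x≠x'} + ‖μ - μ'‖₁)`.
The weights of the second sum have total mass zero, so their positive and negative parts both
have mass `m = ‖u - u'‖₁ / 2`, and the sum is `1/m` times the coupling average
`Σ_{a,b} (u - u')⁺(a) (u - u')⁻(b) (p(x',a,μ') - p(x',b,μ'))` of differences of size at most `2 K1`.
-/

namespace MFG

open Finset

theorem norm_sum_smul_le_of_sum_eq_zero {ι E : Type*} [Fintype ι] [SeminormedAddCommGroup E]
    [NormedSpace ℝ E] {d : ι → ℝ} (hd : ∑ i, d i = 0) {q : ι → E} {C : ℝ}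
    (hq : ∀ i j, ‖q i - q j‖ ≤ C) :
    ‖∑ i, d i • q i‖ ≤ C / 2 * ∑ i, |d i| := by
  obtain ⟨m, hpos⟩ : ∃ m, ∑ i, (d i)⁺ = m := ⟨_, rfl⟩
  have hneg : ∑ i, (d i)⁻ = m := by
    have : ∑ i, ((d i)⁺ - (d i)⁻) = 0 := by simpa only [posPart_sub_negPart] using hd
    rw [sum_sub_distrib] at this
    linarith
  have habs : ∑ i, |d i| = 2 * m := by
    simp only [← posPart_add_negPart, sum_add_distrib, hpos, hneg]
    ring
  rcases (hpos ▸ sum_nonneg fun i _ => posPart_nonneg (d i) : 0 ≤ m).eq_or_lt with hm | hm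
  · have hd0 : ∀ i, d i = 0 := fun i => abs_eq_zero.mp <|
      (sum_eq_zero_iff_of_nonneg fun i _ => abs_nonneg (d i)).mp (by rw [habs, ← hm, mul_zero])
        i (mem_univ i)
    simp [hd0]
  have coupling : ∑ i, ∑ j, ((d i)⁺ * (d j)⁻) • (q i - q j) = m • ∑ i, d i • q i := by
    have hleft : ∑ i, ∑ j, ((d i)⁺ * (d j)⁻) • q i = m • ∑ i, (d i)⁺ • q i := by
      simp_rw [← sum_smul, ← mul_sum, hneg, smul_sum, smul_smul, mul_comm]
    have hright : ∑ i, ∑ j, ((d i)⁺ * (d j)⁻) • q j = m • ∑ j, (d j)⁻ • q j := by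
      rw [sum_comm]
      simp_rw [← sum_smul, ← sum_mul, hpos, smul_sum, smul_smul]
    simp_rw [smul_sub, sum_sub_distrib, hleft, hright, ← smul_sub, ← sum_sub_distrib, ← sub_smul,
      posPart_sub_negPart]
  have hmul : m * ‖∑ i, d i • q i‖ ≤ m * (C * m) := by
    calc m * ‖∑ i, d i • q i‖ = ‖∑ i, ∑ j, ((d i)⁺ * (d j)⁻) • (q i - q j)‖ := by
          rw [coupling, norm_smul, Real.norm_of_nonneg hm.le]
      _ ≤ ∑ i, ∑ j, (d i)⁺ * (d j)⁻ * C := by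
          refine (norm_sum_le _ _).trans (sum_le_sum fun i _ => (norm_sum_le _ _).trans
            (sum_le_sum fun j _ => ?_))
          have hw : 0 ≤ (d i)⁺ * (d j)⁻ := mul_nonneg (posPart_nonneg _) (negPart_nonneg _)
          rw [norm_smul, Real.norm_of_nonneg hw]
          exact mul_le_mul_of_nonneg_left (hq i j) hw
      _ = m * (C * m) := by
          simp_rw [← sum_mul, ← mul_sum, hneg, ← sum_mul, hpos]
          ring
  rw [habs]
  nlinarith [le_of_mul_le_mul_left hmul hm]

theorem l1_eq_dist {E : Type*} [Fintype E] (f g : E → ℝ) :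
    l1 f g = dist (WithLp.toLp 1 f) (WithLp.toLp 1 g) := by
  simp [l1, PiLp.dist_eq_of_L1, Real.dist_eq]

theorem l1_self {E : Type*} [Fintype E] (f : E → ℝ) : l1 f f = 0 := by
  simp [l1]

theorem l1_triangle {E : Type*} [Fintype E] (f g h : E → ℝ) : l1 f h ≤ l1 f g + l1 g h := by
  simpa only [l1_eq_dist] using dist_triangle _ _ _

theorem ind_self {E : Type*} [DecidableEq E] (x : E) : ind x x = 0 := if_pos rfl

theorem ind_le_one {E : Type*} [DecidableEq E] (x y : E) : ind x y ≤ 1 := by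
  unfold ind; split_ifs <;> norm_num

theorem toLp_mixture {ι E : Type*} [Fintype ι] (f : ι → E → ℝ) (w : ι → ℝ) :
    WithLp.toLp 1 (fun y => ∑ i, f i y * w i) = ∑ i, w i • WithLp.toLp 1 (f i) := by
  ext y
  simp [mul_comm]

theorem l1_mixture_le {ι E : Type*} [Fintype ι] [Fintype E] {w : ι → ℝ} (hw : IsProb w)
    {f g : ι → E → ℝ} {C : ℝ} (h : ∀ i, l1 (f i) (g i) ≤ C) :
    l1 (fun y => ∑ i, f i y * w i) (fun y => ∑ i, g i y * w i) ≤ C := by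
  rw [l1_eq_dist, toLp_mixture, toLp_mixture, dist_eq_norm, ← sum_sub_distrib]
  calc ‖∑ i, (w i • WithLp.toLp 1 (f i) - w i • WithLp.toLp 1 (g i))‖ ≤ ∑ i, w i * C := by
        refine (norm_sum_le _ _).trans (sum_le_sum fun i _ => ?_)
        rw [← smul_sub, norm_smul, Real.norm_of_nonneg (hw.1 i), ← dist_eq_norm, ← l1_eq_dist]
        exact mul_le_mul_of_nonneg_left (h i) (hw.1 i)
    _ = C := by rw [← sum_mul, hw.2, one_mul]

theorem l1_mixture_weights_le {ι E : Type*} [Fintype ι] [Fintype E] {w w' : ι → ℝ}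
    (hsum : ∑ i, w i = ∑ i, w' i) {f : ι → E → ℝ} {C : ℝ}
    (h : ∀ i j, l1 (f i) (f j) ≤ 2 * C) :
    l1 (fun y => ∑ i, f i y * w i) (fun y => ∑ i, f i y * w' i) ≤ C * l1 w w' := by
  rw [l1_eq_dist, toLp_mixture, toLp_mixture, dist_eq_norm, ← sum_sub_distrib]
  simp_rw [← sub_smul]
  calc _ ≤ 2 * C / 2 * ∑ i, |w i - w' i| :=
        norm_sum_smul_le_of_sum_eq_zero (by rw [sum_sub_distrib, hsum, sub_self])
          fun i j => by rw [← dist_eq_norm, ← l1_eq_dist]; exact h i j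
    _ = C * l1 w w' := by rw [l1]; ring

section Kernel

variable {X A : Type*} [Fintype X] [Fintype A] [DecidableEq X] [DecidableEq A]
  {p : X → A → (X → ℝ) → X → ℝ} {K1 : ℝ}

theorem KernelLip.l1_le_of_action_eq (hp : KernelLip p K1) (x x' : X) (a : A)
    {μ μ' : X → ℝ} (hμ : IsProb μ) (hμ' : IsProb μ') :
    l1 (p x a μ) (p x' a μ') ≤ K1 * (ind x x' + l1 μ μ') := by
  simpa [ind_self] using hp x x' a a μ μ' hμ hμ'

theorem KernelLip.l1_le_of_state_eq (hp : KernelLip p K1) (hK1 : 0 ≤ K1) (x : X) (a b : A)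
    {μ : X → ℝ} (hμ : IsProb μ) :
    l1 (p x a μ) (p x b μ) ≤ 2 * K1 := by
  calc l1 (p x a μ) (p x b μ) ≤ K1 * (ind x x + 2 * ind a b + l1 μ μ) := hp x x a b μ μ hμ hμ
    _ ≤ 2 * K1 := by
        rw [ind_self, l1_self]
        nlinarith [ind_le_one a b]

end Kernel

theorem statement1_general {X A : Type*} [Fintype X] [Fintype A]
    [DecidableEq X] [DecidableEq A]
    (p : X → A → (X → ℝ) → X → ℝ) (K1 : ℝ) (hK1 : 0 ≤ K1)
    (hp : KernelLip p K1)
    (x x' : X) (u u' : A → ℝ) (hu : IsProb u) (hu' : IsProb u')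
    (μ μ' : X → ℝ) (hμ : IsProb μ) (hμ' : IsProb μ') :
    l1 (fun y => ∑ a, p x a μ y * u a) (fun y => ∑ a, p x' a μ' y * u' a) ≤
      K1 * (ind x x' + l1 u u' + l1 μ μ') := by
  calc _ ≤ l1 (fun y => ∑ a, p x a μ y * u a) (fun y => ∑ a, p x' a μ' y * u a) +
        l1 (fun y => ∑ a, p x' a μ' y * u a) (fun y => ∑ a, p x' a μ' y * u' a) :=
        l1_triangle _ _ _
    _ ≤ K1 * (ind x x' + l1 μ μ') + K1 * l1 u u' :=
        add_le_add (l1_mixture_le hu fun a => hp.l1_le_of_action_eq x x' a hμ hμ')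
          (l1_mixture_weights_le (hu.2.trans hu'.2.symm) fun a b => hp.l1_le_of_state_eq hK1 x' a b hμ')
    _ = K1 * (ind x x' + l1 u u' + l1 μ μ') := by ring

/-- Proposition 2, kernel part. -/
theorem statement1 {X A : Type*} [Fintype X] [Fintype A] [Nonempty X] [Nonempty A]
    [DecidableEq X] [DecidableEq A]
    (p : X → A → (X → ℝ) → X → ℝ) (K1 : ℝ) (hK1 : 0 ≤ K1)
    (hp_prob : IsKernel p) (hp : KernelLip p K1)
    (x x' : X) (u u' : A → ℝ) (hu : IsProb u) (hu' : IsProb u')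
    (μ μ' : X → ℝ) (hμ : IsProb μ) (hμ' : IsProb μ') :
    l1 (fun y => ∑ a, p x a μ y * u a) (fun y => ∑ a, p x' a μ' y * u' a) ≤
      K1 * (ind x x' + l1 u u' + l1 μ μ') :=
  statement1_general p K1 hK1 hp x x' u u' hu hu' μ μ' hμ hμ'

end MFG
end

section
/- Let μ ∈ 𝒫(X) and let K ≥ 0. If v : X → ℝ satisfies |v(x) − v(y)| ≤ K·1_{x≠y} for all x, y ∈ X, then |T_μ v(x) − T_μ v(y)| ≤ (L1 + βKK1/2)·1_{x≠y} for all x, y ∈ X; that is, T_μ maps K-Lipschitz functions (with respect to the discrete metric) to (L1 + βKK1/2)-Lipschitz functions. (Intermediate claim in the proof of Lemma 2.) -/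
namespace MFG

open Finset

lemma IsProb.le_one {E : Type*} [Fintype E] {u : E → ℝ} (h : IsProb u) (a : E) : u a ≤ 1 := by
  have := Finset.single_le_sum (f := u) (fun i _ => h.1 i) (Finset.mem_univ a)
  simpa [h.2] using this

lemma isCompact_prob {A : Type*} [Fintype A] : IsCompact {u : A → ℝ | IsProb u} := by
  apply Metric.isCompact_of_isClosed_isBounded
  · have h1 : IsClosed {u : A → ℝ | ∀ a, 0 ≤ u a} := by
      have : {u : A → ℝ | ∀ a, 0 ≤ u a} = ⋂ a, {u | 0 ≤ u a} := by ext; simp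
      rw [this]
      exact isClosed_iInter fun a => isClosed_le continuous_const (continuous_apply a)
    have h2 : IsClosed {u : A → ℝ | ∑ a, u a = 1} :=
      isClosed_eq (by continuity) continuous_const
    have : {u : A → ℝ | IsProb u} = {u | ∀ a, 0 ≤ u a} ∩ {u | ∑ a, u a = 1} := by
      ext u; exact ⟨fun h => ⟨h.1, h.2⟩, fun h => ⟨h.1, h.2⟩⟩
    rw [this]; exact h1.inter h2
  · apply Bornology.IsBounded.subset (Metric.isBounded_closedBall (x := (0 : A → ℝ)) (r := 1))
    intro u hu
    simp only [Metric.mem_closedBall, dist_zero_right]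
    rw [pi_norm_le_iff_of_nonneg zero_le_one]
    intro a
    rw [Real.norm_eq_abs, abs_le]
    exact ⟨by linarith [hu.1 a], hu.le_one a⟩

lemma bdd_above_range {X A : Type*} [Fintype X] [Fintype A]
    (r : X → A → (X → ℝ) → ℝ) (p : X → A → (X → ℝ) → X → ℝ)
    (Ω : (A → ℝ) → ℝ) (hΩ : ContinuousOn Ω {u | IsProb u})
    (β : ℝ) (hβ0 : 0 < β)
    (μ : X → ℝ) (v : X → ℝ) (hp_prob : IsKernel p) (hμ : IsProb μ) (x : X) :
    BddAbove (Set.range fun u : {w : A → ℝ // IsProb w} =>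
      ((∑ a, r x a μ * u.1 a) - Ω u.1 + β * ∑ y, v y * (∑ a, p x a μ y * u.1 a))) := by
  obtain ⟨C, hC⟩ := isCompact_prob.exists_bound_of_continuousOn hΩ
  refine ⟨(∑ a, |r x a μ|) + C + β * ∑ y, |v y|, ?_⟩
  rintro _ ⟨⟨u, hu⟩, rfl⟩
  dsimp only
  have h1 : ∑ a, r x a μ * u a ≤ ∑ a, |r x a μ| := by
    apply Finset.sum_le_sum
    intro a _
    calc r x a μ * u a ≤ |r x a μ| * 1 := by
          apply mul_le_mul (le_abs_self _) (hu.le_one a) (hu.1 a) (abs_nonneg _)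
      _ = |r x a μ| := mul_one _
  have h2 : -Ω u ≤ C := by
    have := hC u hu
    rw [Real.norm_eq_abs] at this
    linarith [neg_abs_le (Ω u)]
  have h3 : ∑ y, v y * (∑ a, p x a μ y * u a) ≤ ∑ y, |v y| := by
    apply Finset.sum_le_sum
    intro y _
    have hinner0 : 0 ≤ ∑ a, p x a μ y * u a :=
      Finset.sum_nonneg fun a _ => mul_nonneg ((hp_prob x a μ hμ).1 y) (hu.1 a)
    have hinner1 : ∑ a, p x a μ y * u a ≤ 1 := by
      calc ∑ a, p x a μ y * u a ≤ ∑ a, 1 * u a := by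
            apply Finset.sum_le_sum
            intro a _
            exact mul_le_mul_of_nonneg_right ((hp_prob x a μ hμ).le_one y) (hu.1 a)
        _ = 1 := by simp [hu.2]
    calc v y * (∑ a, p x a μ y * u a) ≤ |v y| * 1 :=
          mul_le_mul (le_abs_self _) hinner1 hinner0 (abs_nonneg _)
      _ = |v y| := mul_one _
  have := mul_le_mul_of_nonneg_left h3 hβ0.le
  linarith

-- span bound: there is c with |v z - c| ≤ K/2 for all z
lemma exists_center {X : Type*} [Fintype X] [Nonempty X] [DecidableEq X]
    (K : ℝ) (hK : 0 ≤ K) (v : X → ℝ) (hv : ∀ x y, |v x - v y| ≤ K * ind x y) :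
    ∃ c : ℝ, ∀ z, |v z - c| ≤ K / 2 := by
  obtain ⟨zM, _, hzM⟩ := Finset.exists_max_image Finset.univ v Finset.univ_nonempty
  obtain ⟨zm, _, hzm⟩ := Finset.exists_min_image Finset.univ v Finset.univ_nonempty
  refine ⟨(v zM + v zm) / 2, fun z => ?_⟩
  have hM : v z ≤ v zM := hzM z (Finset.mem_univ z)
  have hm : v zm ≤ v z := hzm z (Finset.mem_univ z)
  have hspan : v zM - v zm ≤ K := by
    have := hv zM zm
    rcases eq_or_ne zM zm with h | h
    · simp [h]; linarith
    · simp [ind, h] at this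
      calc v zM - v zm ≤ |v zM - v zm| := le_abs_self _
        _ ≤ K := this
  rw [abs_le]
  constructor <;> linarith

-- zero-sum weighted bound
lemma wsum_bound {X : Type*} [Fintype X] (v d : X → ℝ) (c M : ℝ)
    (hc : ∀ z, |v z - c| ≤ M) (hMnn : 0 ≤ M) (hd : ∑ z, d z = 0) :
    |∑ z, v z * d z| ≤ M * ∑ z, |d z| := by
  have key : ∑ z, v z * d z = ∑ z, (v z - c) * d z := by
    rw [← sub_eq_zero]
    rw [← Finset.sum_sub_distrib]
    have : ∀ z ∈ Finset.univ, v z * d z - (v z - c) * d z = c * d z := by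
      intro z _; ring
    rw [Finset.sum_congr rfl this, ← Finset.mul_sum, hd, mul_zero]
  rw [key]
  calc |∑ z, (v z - c) * d z| ≤ ∑ z, |(v z - c) * d z| := Finset.abs_sum_le_sum_abs _ _
    _ ≤ ∑ z, M * |d z| := by
        apply Finset.sum_le_sum
        intro z _
        rw [abs_mul]
        exact mul_le_mul_of_nonneg_right (hc z) (abs_nonneg _)
    _ = M * ∑ z, |d z| := by rw [Finset.mul_sum]


lemma prob_nonempty {A : Type*} [Fintype A] [Nonempty A] :
    Nonempty {w : A → ℝ // IsProb w} := by
  refine ⟨⟨fun _ => 1 / Fintype.card A, fun a => by positivity, ?_⟩⟩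
  have h : (0:ℝ) < Fintype.card A := by
    exact_mod_cast Fintype.card_pos
  simp [Finset.sum_const, Finset.card_univ]

lemma diff_bound {X A : Type*} [Fintype X] [Fintype A] [Nonempty X]
    [DecidableEq X] [DecidableEq A]
    (r : X → A → (X → ℝ) → ℝ) (p : X → A → (X → ℝ) → X → ℝ)
    (L1 K1 : ℝ) (hr : RewardLip r L1)
    (hp_prob : IsKernel p) (hp : KernelLip p K1)
    (Ω : (A → ℝ) → ℝ) (β : ℝ) (hβ0 : 0 < β)
    (μ : X → ℝ) (hμ : IsProb μ)
    (K : ℝ) (hK : 0 ≤ K) (v : X → ℝ)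
    (hv : ∀ x y, |v x - v y| ≤ K * ind x y)
    (x y : X) (hxy : x ≠ y) (u : A → ℝ) (hu : IsProb u) :
    |((∑ a, r x a μ * u a) - Ω u + β * ∑ z, v z * (∑ a, p x a μ z * u a)) -
     ((∑ a, r y a μ * u a) - Ω u + β * ∑ z, v z * (∑ a, p y a μ z * u a))| ≤
      L1 + β * K * K1 / 2 := by
  obtain ⟨c, hc⟩ := exists_center K hK v hv
  have hl1μ : l1 μ μ = 0 := by simp [l1]
  have hindxy : ind x y = 1 := by simp [ind, hxy]
  -- reward part
  have hrew : |∑ a, r x a μ * u a - ∑ a, r y a μ * u a| ≤ L1 := by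
    rw [← Finset.sum_sub_distrib]
    calc |∑ a, (r x a μ * u a - r y a μ * u a)| ≤ ∑ a, |r x a μ * u a - r y a μ * u a| :=
          Finset.abs_sum_le_sum_abs _ _
      _ ≤ ∑ a, L1 * u a := by
          apply Finset.sum_le_sum
          intro a _
          rw [← sub_mul, abs_mul, abs_of_nonneg (hu.1 a)]
          apply mul_le_mul_of_nonneg_right _ (hu.1 a)
          have hinda : ind a a = 0 := by simp [ind]
          have := hr x y a a μ μ hμ hμ
          simpa [hindxy, hinda, hl1μ] using this
      _ = L1 := by rw [← Finset.mul_sum, hu.2, mul_one]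
  -- kernel part
  have hswap : ∀ x' : X, ∑ z, v z * (∑ a, p x' a μ z * u a) =
      ∑ a, (∑ z, v z * p x' a μ z) * u a := by
    intro x'
    simp_rw [Finset.mul_sum, Finset.sum_mul, mul_assoc]
    exact Finset.sum_comm
  have hker : |∑ z, v z * (∑ a, p x a μ z * u a) - ∑ z, v z * (∑ a, p y a μ z * u a)| ≤
      K * K1 / 2 := by
    rw [hswap x, hswap y, ← Finset.sum_sub_distrib]
    calc |∑ a, ((∑ z, v z * p x a μ z) * u a - (∑ z, v z * p y a μ z) * u a)|
        ≤ ∑ a, |(∑ z, v z * p x a μ z) * u a - (∑ z, v z * p y a μ z) * u a| :=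
          Finset.abs_sum_le_sum_abs _ _
      _ ≤ ∑ a, (K / 2 * K1) * u a := by
          apply Finset.sum_le_sum
          intro a _
          rw [← sub_mul, abs_mul, abs_of_nonneg (hu.1 a)]
          apply mul_le_mul_of_nonneg_right _ (hu.1 a)
          rw [← Finset.sum_sub_distrib]
          have heq : ∀ z ∈ Finset.univ, v z * p x a μ z - v z * p y a μ z =
              v z * (p x a μ z - p y a μ z) := by intro z _; ring
          rw [Finset.sum_congr rfl heq]
          have hd0 : ∑ z, (p x a μ z - p y a μ z) = 0 := by
            rw [Finset.sum_sub_distrib, (hp_prob x a μ hμ).2, (hp_prob y a μ hμ).2, sub_self]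
          have hw := wsum_bound v (fun z => p x a μ z - p y a μ z) c (K/2) hc
            (by linarith) hd0
          have hl1p : l1 (p x a μ) (p y a μ) ≤ K1 := by
            have hinda : ind a a = 0 := by simp [ind]
            have := hp x y a a μ μ hμ hμ
            simpa [hindxy, hinda, hl1μ] using this
          calc |∑ z, v z * (p x a μ z - p y a μ z)|
              ≤ K / 2 * ∑ z, |p x a μ z - p y a μ z| := hw
            _ ≤ K / 2 * K1 := by
                apply mul_le_mul_of_nonneg_left _ (by linarith)
                exact hl1p
      _ = K / 2 * K1 := by rw [← Finset.mul_sum, hu.2, mul_one]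
      _ = K * K1 / 2 := by ring
  calc |((∑ a, r x a μ * u a) - Ω u + β * ∑ z, v z * (∑ a, p x a μ z * u a)) -
     ((∑ a, r y a μ * u a) - Ω u + β * ∑ z, v z * (∑ a, p y a μ z * u a))|
      = |(∑ a, r x a μ * u a - ∑ a, r y a μ * u a) +
        β * (∑ z, v z * (∑ a, p x a μ z * u a) - ∑ z, v z * (∑ a, p y a μ z * u a))| := by
        ring_nf
    _ ≤ |∑ a, r x a μ * u a - ∑ a, r y a μ * u a| +
        |β * (∑ z, v z * (∑ a, p x a μ z * u a) - ∑ z, v z * (∑ a, p y a μ z * u a))| :=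
        abs_add_le _ _
    _ ≤ L1 + β * (K * K1 / 2) := by
        rw [abs_mul, abs_of_pos hβ0]
        exact add_le_add hrew (mul_le_mul_of_nonneg_left hker hβ0.le)
    _ = L1 + β * K * K1 / 2 := by ring


/-- `T_μ` maps `K`-Lipschitz functions (w.r.t. the discrete metric)
to `(L1 + β K K1 / 2)`-Lipschitz functions. -/
theorem statement4 {X A : Type*} [Fintype X] [Fintype A] [Nonempty X] [Nonempty A]
    [DecidableEq X] [DecidableEq A]
    (r : X → A → (X → ℝ) → ℝ) (p : X → A → (X → ℝ) → X → ℝ)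
    (L1 K1 : ℝ) (hL1 : 0 ≤ L1) (hK1 : 0 ≤ K1)
    (hr_nonneg : RewardNonneg r) (hr : RewardLip r L1)
    (hp_prob : IsKernel p) (hp : KernelLip p K1)
    (Ω : (A → ℝ) → ℝ) (hΩ : ContinuousOn Ω {u | IsProb u})
    (β : ℝ) (hβ0 : 0 < β) (hβ1 : β < 1)
    (μ : X → ℝ) (hμ : IsProb μ)
    (K : ℝ) (hK : 0 ≤ K) (v : X → ℝ)
    (hv : ∀ x y, |v x - v y| ≤ K * ind x y) :
    ∀ x y, |Tbell r p Ω β μ v x - Tbell r p Ω β μ v y| ≤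
      (L1 + β * K * K1 / 2) * ind x y := by
  intro x y
  rcases eq_or_ne x y with h | h
  · subst h; simp [ind]
  · have hind : ind x y = 1 := by simp [ind, h]
    rw [hind, mul_one]
    haveI : Nonempty {w : A → ℝ // IsProb w} := prob_nonempty
    have hle : ∀ x' y' : X, x' ≠ y' → Tbell r p Ω β μ v x' ≤
        Tbell r p Ω β μ v y' + (L1 + β * K * K1 / 2) := by
      intro x' y' hne
      rw [Tbell]
      apply ciSup_le
      intro u
      have hd := diff_bound r p L1 K1 hr hp_prob hp Ω β hβ0 μ hμ K hK v hv x' y' hne u.1 u.2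
      have h2 := (abs_le.mp hd).2
      have h3 : ((∑ a, r y' a μ * u.1 a) - Ω u.1 + β * ∑ z, v z * (∑ a, p y' a μ z * u.1 a))
          ≤ Tbell r p Ω β μ v y' :=
        le_ciSup (bdd_above_range r p Ω hΩ β hβ0 μ v hp_prob hμ y') u
      linarith
    rw [abs_sub_le_iff]
    constructor
    · linarith [hle x y h]
    · linarith [hle y x h.symm]


end MFG
end
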